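/- Let u be a rational solution of the generic Painlevé-III equation with parameters (Θ₀, Θ∞), and let x₀ ∈ ℂ with x₀ ≠ 0 be a pole of u (a root of its reduced denominator). Then x₀ is a simple pole, and the residue of u at x₀ equals 1/2 or −1/2; that is, there is a function h analytic in a neighborhood of x₀ and r ∈ {1/2, −1/2} such that u(x) = r/(x − x₀) + h(x) for x near x₀, x ≠ x₀. -/

import Mathlib

open Complex Polynomial Filter Topology

/-- The generic Painlevé-III equation with parameters `(Θ0, Θinf)` holds for the
function `u` at the point `x`. -/
def PIIIat (Θ0 Θinf : ℂ) (u : ℂ → ℂ) (x : ℂ) : Prop :=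
  deriv (deriv u) x =
    (deriv u x) ^ 2 / u x - deriv u x / x
      + (4 * Θ0 * (u x) ^ 2 + 4 * (1 - Θinf)) / x
      + 4 * (u x) ^ 3 - 4 / u x

/-- The rational function `p/q` is a rational solution of the generic Painlevé-III
equation with parameters `(Θ0, Θinf)`. -/
def IsRatSolutionPIII (Θ0 Θinf : ℂ) (p q : Polynomial ℂ) : Prop :=
  p ≠ 0 ∧ q ≠ 0 ∧ ∀ x : ℂ, x ≠ 0 → p.eval x ≠ 0 → q.eval x ≠ 0 →
    PIIIat Θ0 Θinf (fun y => p.eval y / q.eval y) x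

lemma deriv_eval_div (p q : Polynomial ℂ) (x : ℂ) (hq : q.eval x ≠ 0) :
    deriv (fun y => p.eval y / q.eval y) x
      = (derivative p * q - p * derivative q).eval x / (q.eval x) ^ 2 := by
  rw [deriv_fun_div p.differentiableAt q.differentiableAt hq]
  simp [Polynomial.deriv]

lemma deriv2_eval_div (p q : Polynomial ℂ) (x : ℂ) (hq : q.eval x ≠ 0) :
    deriv (deriv (fun y => p.eval y / q.eval y)) x
      = (derivative (derivative p * q - p * derivative q) * q ^ 2
          - (derivative p * q - p * derivative q) * derivative (q ^ 2)).eval x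
        / (q.eval x) ^ 4 := by
  have hev : ∀ᶠ y in 𝓝 x, q.eval y ≠ 0 := q.continuousAt.eventually_ne hq
  have h1 : deriv (fun y => p.eval y / q.eval y)
      =ᶠ[𝓝 x] fun y => (derivative p * q - p * derivative q).eval y / (q^2).eval y := by
    filter_upwards [hev] with y hy
    rw [deriv_eval_div p q y hy]; simp
  rw [h1.deriv_eq, deriv_eval_div _ (q^2) x (by simpa using pow_ne_zero 2 hq)]
  simp; ring

/-- Scalar form of the cleared PIII equation. -/
lemma PIII_scalar (Θ0 Θinf a b da db dda ddb x : ℂ) (hx : x ≠ 0) (hp : a ≠ 0) (hq : b ≠ 0)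
    (H : ((dda*b + da*db - (da*db + a*ddb)) * b^2 - (da*b - a*db)*(2*b*db)) / b^4
      = ((da*b - a*db)/b^2)^2 / (a/b) - ((da*b - a*db)/b^2)/x
        + (4*Θ0*(a/b)^2 + 4*(1-Θinf))/x + 4*(a/b)^3 - 4/(a/b)) :
    x * a * ((dda*b + da*db - (da*db + a*ddb)) * b - 2*(da*b - a*db)*db)
      = x*(da*b - a*db)^2 - a*b*(da*b - a*db) + a*b*(4*Θ0*a^2 + 4*(1-Θinf)*b^2)
        + 4*x*a^4 - 4*x*b^4 := by
  obtain ⟨u, hub, hune⟩ : ∃ u : ℂ, u * b = a ∧ u ≠ 0 :=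
    ⟨a / b, div_mul_cancel₀ a hq, div_ne_zero hp hq⟩
  subst hub
  field_simp [hune, hq, hx] at H
  refine mul_right_cancel₀ (b := u * x * b ^ 6) (by simp [hune, hq, hx]) ?_
  linear_combination (u * x * b ^ 8) * H

/-- The polynomial identity satisfied by a rational solution. -/
lemma PIII_poly_identity (Θ0 Θinf : ℂ) (p q : Polynomial ℂ)
    (hsol : IsRatSolutionPIII Θ0 Θinf p q) :
    X * p * (derivative (derivative p * q - p * derivative q) * q
        - 2 * (derivative p * q - p * derivative q) * derivative q)
      = X * (derivative p * q - p * derivative q) ^ 2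
          - p * q * (derivative p * q - p * derivative q)
          + p * q * (C (4 * Θ0) * p ^ 2 + C (4 * (1 - Θinf)) * q ^ 2)
          + 4 * X * p ^ 4 - 4 * X * q ^ 4 := by
  obtain ⟨hp0, hq0, hsol⟩ := hsol
  apply Polynomial.eq_of_infinite_eval_eq
  have hfin : Set.Finite {x : ℂ | (X * p * q).IsRoot x} :=
    Polynomial.finite_setOf_isRoot (by
      simp only [ne_eq, mul_eq_zero, X_ne_zero, false_or, not_or]
      exact ⟨hp0, hq0⟩)
  apply Set.Infinite.mono (s := {x : ℂ | (X * p * q).IsRoot x}ᶜ)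
  swap
  · exact hfin.infinite_compl
  intro x hx
  simp only [Set.mem_compl_iff, Set.mem_setOf_eq, IsRoot, eval_mul, eval_X, mul_eq_zero,
    not_or] at hx
  obtain ⟨⟨hx0, hpx⟩, hqx⟩ := hx
  have H := hsol x hx0 hpx hqx
  unfold PIIIat at H
  rw [deriv2_eval_div p q x hqx, deriv_eval_div p q x hqx] at H
  simp only [derivative_mul, derivative_sub, derivative_pow, Nat.cast_ofNat, derivative_X,
    derivative_C, eval_mul, eval_add, eval_sub, eval_pow, eval_X, eval_C, eval_ofNat,
    Set.mem_setOf_eq] at H ⊢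
  have key := PIII_scalar Θ0 Θinf (p.eval x) (q.eval x) ((derivative p).eval x)
    ((derivative q).eval x) ((derivative (derivative p)).eval x)
    ((derivative (derivative q)).eval x) x hx0 hpx hqx (by linear_combination H)
  linear_combination key

/-- A nonzero pole of a rational solution of Painlevé-III (a root of the reduced
denominator) is simple, with residue `1/2` or `-1/2`. -/
theorem nonzero_pole_is_simple_with_residue_half (Θ0 Θinf : ℂ) (p q : Polynomial ℂ)
    (hsol : IsRatSolutionPIII Θ0 Θinf p q) (hred : IsCoprime p q)
    (x₀ : ℂ) (hx₀ : x₀ ≠ 0) (hpole : q.eval x₀ = 0) :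
    ∃ (r : ℂ) (h : ℂ → ℂ), (r = 1 / 2 ∨ r = -(1 / 2)) ∧ AnalyticAt ℂ h x₀ ∧
      ∀ᶠ x in 𝓝[≠] x₀, p.eval x / q.eval x = r / (x - x₀) + h x := by
  -- p(x₀) ≠ 0 by coprimality
  have hpx₀ : p.eval x₀ ≠ 0 := by
    obtain ⟨u, v, huv⟩ := hred
    intro h0
    have := congrArg (eval x₀) huv
    simp [h0, hpole] at this
  -- evaluate the polynomial identity at x₀
  have hid := PIII_poly_identity Θ0 Θinf p q hsol
  have hev := congrArg (eval x₀) hid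
  simp only [eval_mul, eval_add, eval_sub, eval_pow, eval_X, eval_C, eval_ofNat, hpole,
    mul_zero, zero_mul, sub_zero, zero_pow, add_zero, zero_add] at hev
  set a := p.eval x₀ with ha
  set db := (derivative q).eval x₀ with hdb
  -- hev should give : db^2 = 4 * a^2
  have hkey : db ^ 2 = 4 * a ^ 2 := by
    have hxa : x₀ * a ^ 2 ≠ 0 := mul_ne_zero hx₀ (pow_ne_zero 2 hpx₀)
    field_simp at hev ⊢
    apply mul_left_cancel₀ hxa
    linear_combination x₀ * hev
  have hdbne : db ≠ 0 := by
    intro h0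
    apply hpx₀
    have ha2 : a ^ 2 = 0 := by
      have h4 : (4 : ℂ) * a ^ 2 = 0 := by rw [← hkey, h0]; ring
      linear_combination h4 / 4
    exact pow_eq_zero_iff (two_ne_zero) |>.mp ha2
  -- factor q = (X - x₀) * q₁
  set q₁ : Polynomial ℂ := q /ₘ (X - C x₀) with hq₁
  have hfac : (X - C x₀) * q₁ = q := mul_divByMonic_eq_iff_isRoot.mpr hpole
  have hq₁x₀ : q₁.eval x₀ = db := by
    have := congrArg (fun r => (derivative r).eval x₀) hfac
    simp only [derivative_mul, derivative_sub, derivative_X, derivative_C, sub_zero, one_mul,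
      eval_add, eval_mul, eval_sub, eval_X, eval_C, sub_self, zero_mul, add_zero] at this
    simpa using this
  have hq₁ne : q₁.eval x₀ ≠ 0 := by rw [hq₁x₀]; exact hdbne
  -- residue
  set r : ℂ := a / db with hr
  have hrdb : r * db = a := div_mul_cancel₀ a hdbne
  have hrval : r = 1 / 2 ∨ r = -(1 / 2) := by
    have h4 : (db - 2 * a) * (db + 2 * a) = 0 := by linear_combination hkey
    rcases mul_eq_zero.mp h4 with h | h
    · left
      have : db = 2 * a := by linear_combination h
      rw [hr, this]
      field_simp
    · right
      have : db = -(2 * a) := by linear_combination h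
      rw [hr, this]
      field_simp
  -- analytic remainder
  set g : Polynomial ℂ := p - C r * q₁ with hg
  have hgx₀ : g.eval x₀ = 0 := by
    simp [hg, hq₁x₀, hrdb]; exact sub_self _
  set g₁ : Polynomial ℂ := g /ₘ (X - C x₀) with hg₁
  have hgfac : (X - C x₀) * g₁ = g := mul_divByMonic_eq_iff_isRoot.mpr hgx₀
  refine ⟨r, fun x => g₁.eval x / q₁.eval x, hrval, ?_, ?_⟩
  · exact (AnalyticOnNhd.eval_polynomial g₁ x₀ trivial).div
      (AnalyticOnNhd.eval_polynomial q₁ x₀ trivial) hq₁ne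
  · have hq₁ev : ∀ᶠ x in 𝓝[≠] x₀, q₁.eval x ≠ 0 :=
      eventually_nhdsWithin_of_eventually_nhds (q₁.continuousAt.eventually_ne hq₁ne)
    filter_upwards [hq₁ev, self_mem_nhdsWithin] with x hq₁x hxne
    have hxx₀ : x - x₀ ≠ 0 := sub_ne_zero.mpr hxne
    have hqx : q.eval x = (x - x₀) * q₁.eval x := by
      rw [← hfac]; simp
    have hgx : (x - x₀) * g₁.eval x = p.eval x - r * q₁.eval x := by
      have := congrArg (eval x) hgfac
      simpa [hg] using this
    rw [hqx]
    field_simp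
    linear_combination -hgx
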